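/- Let E be a directed graph with finitely many vertices, no directed cycles, and no infinite emitters, with sinks W and V = E⁰ \ W, and matrices B, C as above. Then the semigroup generated by { [δ_v] : v ∈ E⁰ } in G = coker((Bᵗ−I, Cᵗ)) equals { [x] : x ∈ ℕ^V ⊕ ℕ^W }, and under the isomorphism G ≅ ℤ^W (sending [δ_w] ↦ δ_w for sinks w), the class [δ_v] of a non-sink v maps to the vector w ↦ (number of directed paths from v to the sink w). -/

import Mathlib

open Finsupp

section GraphK

/- A graph with finitely many vertices, sinks `W` and non-sinks `V`: every edge has
source in `V` and range in `V ⊕ W`; each `v : V` emits finitely many edges. -/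
variable {V W E : Type} (s : E → V) (r : E → V ⊕ W) [∀ v : V, Fintype {e : E // s e = v}]

/-- The standard basis vector `δ_u` of `ℤ^V ⊕ ℤ^W`. -/
noncomputable def delta : V ⊕ W → (V →₀ ℤ) × (W →₀ ℤ) :=
  Sum.elim (fun v => (Finsupp.single v 1, 0)) (fun w => ((0 : V →₀ ℤ), Finsupp.single w 1))

/-- The map `(Bᵗ - I, Cᵗ) : ℤ^V → ℤ^V ⊕ ℤ^W`. -/
noncomputable def graphK : (V →₀ ℤ) →+ (V →₀ ℤ) × (W →₀ ℤ) :=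
  Finsupp.liftAddHom (fun v => zmultiplesHom _
    ((∑ e : {e : E // s e = v}, delta (r e)) - delta (Sum.inl v)))

end GraphK


section Aux
variable {V W E : Type} (s : E → V) (r : E → V ⊕ W)

/-- Paths from `v` to sink `w`. -/
def PathTo (v : V) (w : W) : Type := {l : List E // ∃ h : l ≠ [], s (l.head h) = v ∧
  l.Chain' (fun a b => r a = Sum.inl (s b)) ∧ r (l.getLast h) = Sum.inr w}

def Tgt (w : W) : V ⊕ W → Type :=
  Sum.elim (fun v => PathTo s r v w) (fun w' => PLift (w' = w))

def consPath (v : V) (w : W) (e : {e : E // s e = v}) :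
    ∀ u, r e.1 = u → Tgt s r w u → PathTo s r v w
  | Sum.inl v', h, x => ⟨e.1 :: x.1, by
      obtain ⟨ht, hs, hch, hlast⟩ := x.2
      refine ⟨List.cons_ne_nil _ _, e.2, ?_, ?_⟩
      · rw [List.Chain', List.isChain_cons]
        refine ⟨?_, hch⟩
        intro b hb
        rw [List.head?_eq_head ht] at hb
        cases hb
        rw [h, hs]
      · rw [List.getLast_cons ht]
        exact hlast⟩
  | Sum.inr w', h, x => ⟨[e.1], by
      refine ⟨List.cons_ne_nil _ _, e.2, List.isChain_singleton _, ?_⟩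
      simp [h, x.down]⟩

def pathSigma (v : V) (w : W) :
    (Σ e : {e : E // s e = v}, Tgt s r w (r e.1)) → PathTo s r v w :=
  fun p => consPath s r v w p.1 (r p.1.1) rfl p.2

lemma pathSigma_cast (v : V) (w : W) (e : {e : E // s e = v}) (u : V ⊕ W)
    (h : r e.1 = u) (x : Tgt s r w u) :
    pathSigma s r v w ⟨e, cast (congrArg (Tgt s r w) h).symm x⟩ =
      consPath s r v w e u h x := by
  subst h; rfl

lemma consPath_fst (v : V) (w : W) (e : {e : E // s e = v}) (u : V ⊕ W)
    (h : r e.1 = u) (x : Tgt s r w u) :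
    (consPath s r v w e u h x).1 =
      e.1 :: (Sum.rec (motive := fun u => Tgt s r w u → List E)
        (fun _ x => x.1) (fun _ _ => []) u x) := by
  cases u <;> rfl

lemma pathSigma_bij (v : V) (w : W) : Function.Bijective (pathSigma s r v w) := by
  constructor
  · rintro ⟨e, x⟩ ⟨e', x'⟩ hxy
    have hl := congrArg Subtype.val hxy
    simp only [pathSigma, consPath_fst] at hl
    obtain ⟨he, ht⟩ := List.cons_eq_cons.mp hl
    have he2 : e = e' := Subtype.ext he
    subst he2
    clear hxy hl
    suffices hx : x = x' by rw [hx]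
    revert ht
    revert x x'
    rcases hre : r e.1 with v' | w' <;> intro x x' ht
    · exact Subtype.ext ht
    · exact Subsingleton.elim (α := PLift (w' = w)) x x'
  · rintro ⟨l, hne, hs, hch, hlast⟩
    cases l with
    | nil => exact absurd rfl hne
    | cons e t =>
      cases t with
      | nil =>
        have hre : r e = Sum.inr w := hlast
        exact ⟨⟨⟨e, hs⟩, cast (congrArg (Tgt s r w) hre).symm (PLift.up rfl)⟩,
          (pathSigma_cast s r v w ⟨e, hs⟩ _ hre _).trans (Subtype.ext rfl)⟩
      | cons e' t' =>
        rw [List.Chain', List.isChain_cons_cons] at hch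
        have hre : r e = Sum.inl (s e') := hch.1
        refine ⟨⟨⟨e, hs⟩, cast (congrArg (Tgt s r w) hre).symm
          (⟨e' :: t', List.cons_ne_nil _ _, rfl, hch.2, by
            rw [← List.getLast_cons (List.cons_ne_nil e' t')]; exact hlast⟩ :
            PathTo s r (s e') w)⟩, ?_⟩
        exact (pathSigma_cast s r v w ⟨e, hs⟩ _ hre _).trans (Subtype.ext rfl)

end Aux

section Count
variable {V W E : Type} (s : E → V) (r : E → V ⊕ W)

/-- `a` is a child of `b`. -/
def childRel : V → V → Prop := fun a b => ∃ e : E, s e = b ∧ r e = Sum.inl a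

lemma childRel_wf [Finite V]
    (hnoloop : ∀ v : V, ¬ Relation.TransGen
      (fun a b : V => ∃ e : E, s e = a ∧ r e = Sum.inl b) v v) :
    WellFounded (childRel s r) := by
  haveI : IsIrrefl V (Relation.TransGen (childRel s r)) :=
    ⟨fun v hv => hnoloop v (Relation.transGen_swap.mp hv)⟩
  exact Subrelation.wf (fun h => Relation.TransGen.single h)
    (Finite.wellFounded_of_trans_of_irrefl _)

variable [∀ v : V, Fintype {e : E // s e = v}]

lemma tgt_finite (hwf : WellFounded (childRel s r)) :
    ∀ (v : V) (w : W), Finite (PathTo s r v w) := by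
  intro v
  induction v using hwf.induction with
  | _ v ih =>
  intro w
  haveI hf : ∀ e : {e : E // s e = v}, Finite (Tgt s r w (r e.1)) := by
    intro e
    rcases hre : r e.1 with v' | w'
    · exact ih v' ⟨e.1, e.2, hre⟩ w
    · exact Finite.of_subsingleton (α := PLift (w' = w))
  exact Finite.of_surjective _ (pathSigma_bij s r v w).2

open Classical in
lemma pathTo_card (hwf : WellFounded (childRel s r)) (v : V) (w : W) :
    Nat.card (PathTo s r v w) = ∑ e : {e : E // s e = v},
      Sum.elim (fun v' => Nat.card (PathTo s r v' w))
        (fun w' => if w' = w then 1 else 0) (r e.1) := by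
  haveI hf : ∀ e : {e : E // s e = v}, Finite (Tgt s r w (r e.1)) := by
    intro e
    rcases hre : r e.1 with v' | w'
    · exact tgt_finite s r hwf v' w
    · exact Finite.of_subsingleton (α := PLift (w' = w))
  haveI : ∀ e : {e : E // s e = v}, Fintype (Tgt s r w (r e.1)) :=
    fun e => Fintype.ofFinite _
  calc Nat.card (PathTo s r v w)
      = Nat.card (Σ e : {e : E // s e = v}, Tgt s r w (r e.1)) :=
        (Nat.card_eq_of_bijective _ (pathSigma_bij s r v w)).symm
    _ = Fintype.card (Σ e : {e : E // s e = v}, Tgt s r w (r e.1)) :=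
        Nat.card_eq_fintype_card
    _ = ∑ e : {e : E // s e = v}, Fintype.card (Tgt s r w (r e.1)) :=
        Fintype.card_sigma
    _ = ∑ e : {e : E // s e = v}, Nat.card (Tgt s r w (r e.1)) := by
        refine Finset.sum_congr rfl fun e _ => Nat.card_eq_fintype_card.symm
    _ = _ := by
        refine Finset.sum_congr rfl fun e _ => ?_
        rcases hre : r e.1 with v' | w'
        · rfl
        · classical
          simp only [Sum.elim_inr]
          by_cases h : w' = w
          · subst h
            rw [if_pos rfl]
            haveI : Unique (PLift (w' = w')) := ⟨⟨⟨rfl⟩⟩, fun _ => Subsingleton.elim _ _⟩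
            exact Nat.card_unique (α := PLift (w' = w'))
          · rw [if_neg h]
            haveI : IsEmpty (PLift (w' = w)) := ⟨fun x => h x.down⟩
            exact @Nat.card_of_isEmpty (PLift (w' = w)) _

variable [Fintype W]

/-- the path-count vector of `v`. -/
noncomputable def pcount (v : V) : W →₀ ℤ :=
  Finsupp.equivFunOnFinite.symm fun w => (Nat.card (PathTo s r v w) : ℤ)

lemma pcount_apply (v : V) (w : W) :
    pcount s r v w = (Nat.card (PathTo s r v w) : ℤ) := rfl

lemma pcount_rec (hwf : WellFounded (childRel s r)) (v : V) :
    pcount s r v = ∑ e : {e : E // s e = v},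
      Sum.elim (pcount s r) (fun w' => Finsupp.single w' 1) (r e.1) := by
  ext w
  rw [Finsupp.finset_sum_apply, pcount_apply, pathTo_card s r hwf v w]
  push_cast
  refine Finset.sum_congr rfl fun e _ => ?_
  rcases hre : r e.1 with v' | w'
  · rfl
  · classical
    simp only [Sum.elim_inr, Finsupp.single_apply]
    split_ifs <;> simp

end Count

section GraphK2
variable {V W E : Type} (s : E → V) (r : E → V ⊕ W) [∀ v : V, Fintype {e : E // s e = v}]
variable [Fintype W]

noncomputable def phi : (V →₀ ℤ) × (W →₀ ℤ) →+ (W →₀ ℤ) :=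
  ((Finsupp.liftAddHom fun v => zmultiplesHom _ (pcount s r v)).comp
    (AddMonoidHom.fst _ _)) + AddMonoidHom.snd _ _

lemma phi_delta_inl (v : V) : phi s r (delta (Sum.inl v)) = pcount s r v := by
  simp [phi, delta, Finsupp.liftAddHom_apply_single]

lemma phi_delta_inr (w : W) : phi s r (delta (Sum.inr w)) = Finsupp.single w 1 := by
  simp [phi, delta]

lemma graphK_single_one (v : V) :
    graphK s r (Finsupp.single v 1) =
      (∑ e : {e : E // s e = v}, delta (r e.1)) - delta (Sum.inl v) := by
  simp [graphK, Finsupp.liftAddHom_apply_single]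

lemma phi_graphK (hwf : WellFounded (childRel s r)) (x : V →₀ ℤ) :
    phi s r (graphK s r x) = 0 := by
  have h1 : ∀ v : V, phi s r (graphK s r (Finsupp.single v 1)) = 0 := by
    intro v
    rw [graphK_single_one, map_sub, map_sum, phi_delta_inl, pcount_rec s r hwf,
      sub_eq_zero]
    refine Finset.sum_congr rfl fun e _ => ?_
    rcases hre : r e.1 with v' | w'
    · simpa using phi_delta_inl s r v'
    · simpa using phi_delta_inr s r w'
  induction x using Finsupp.induction_linear with
  | zero => simp
  | add f g hf hg => rw [map_add, map_add, hf, hg, add_zero]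
  | single a b =>
    have : (Finsupp.single a b : V →₀ ℤ) = b • Finsupp.single a 1 := by
      rw [Finsupp.smul_single, smul_eq_mul, mul_one]
    rw [this, map_zsmul, map_zsmul, h1, smul_zero]

lemma key_mem (hwf : WellFounded (childRel s r)) (v : V) :
    ((Finsupp.single v 1 : V →₀ ℤ), -(pcount s r v)) ∈ (graphK s r).range := by
  induction v using hwf.induction with
  | _ v ih =>
  have hsum : (∑ e : {e : E // s e = v}, (delta (r e.1) - ((0 : V →₀ ℤ),
      Sum.elim (pcount s r) (fun w' => Finsupp.single w' 1) (r e.1)))) ∈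
      (graphK s r).range := by
    refine AddSubgroup.sum_mem _ fun e _ => ?_
    rcases hre : r e.1 with v' | w'
    · have h2 : delta (Sum.inl v') - ((0 : V →₀ ℤ),
          Sum.elim (pcount s r) (fun w' => Finsupp.single w' 1) (Sum.inl v')) =
          ((Finsupp.single v' 1 : V →₀ ℤ), -(pcount s r v')) := by
        simp [delta, Prod.ext_iff]
      rw [h2]
      exact ih v' ⟨e.1, e.2, hre⟩
    · have h2 : delta (Sum.inr w') - ((0 : V →₀ ℤ),
          Sum.elim (pcount s r) (fun w' => Finsupp.single w' 1) (Sum.inr w')) = 0 := by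
        simp [delta, Prod.ext_iff]
      rw [h2]
      exact zero_mem _
  have heq : ((Finsupp.single v 1 : V →₀ ℤ), -(pcount s r v)) =
      (∑ e : {e : E // s e = v}, (delta (r e.1) - ((0 : V →₀ ℤ),
        Sum.elim (pcount s r) (fun w' => Finsupp.single w' 1) (r e.1)))) -
      graphK s r (Finsupp.single v 1) := by
    rw [graphK_single_one, Finset.sum_sub_distrib, pcount_rec s r hwf]
    refine Prod.ext ?_ ?_ <;>
      simp [delta, Prod.fst_sum, Prod.snd_sum] <;> abel
  rw [heq]
  exact sub_mem hsum (AddMonoidHom.mem_range.mpr ⟨_, rfl⟩)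

end GraphK2

/-- for a graph with finitely many vertices, no directed cycles and no
infinite emitters, the semigroup generated by the classes `[δ_u]`, `u ∈ E⁰`, in
`G = coker (Bᵗ - I, Cᵗ)` equals `{ [x] : x ∈ ℕ^V ⊕ ℕ^W }`, and there is an isomorphism
`G ≅ ℤ^W` sending `[δ_w] ↦ δ_w` for sinks `w` and sending the class `[δ_v]` of a
non-sink `v` to the vector whose `w`-coordinate is the number of directed paths from
`v` to the sink `w`. -/
theorem stmt15 (V W E : Type) [Fintype V] [Fintype W] [Countable E]
    (s : E → V) (r : E → V ⊕ W) [∀ v : V, Fintype {e : E // s e = v}]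
    (hV : ∀ v : V, Nonempty {e : E // s e = v})
    (hnoloop : ∀ v : V,
      ¬ Relation.TransGen (fun a b : V => ∃ e : E, s e = a ∧ r e = Sum.inl b) v v) :
    ((AddSubmonoid.closure (Set.range fun u : V ⊕ W =>
        (QuotientAddGroup.mk (delta u) :
          ((V →₀ ℤ) × (W →₀ ℤ)) ⧸ (graphK s r).range)) :
        Set (((V →₀ ℤ) × (W →₀ ℤ)) ⧸ (graphK s r).range)) =
      QuotientAddGroup.mk '' {x : (V →₀ ℤ) × (W →₀ ℤ) |
        (∀ v, 0 ≤ x.1 v) ∧ (∀ w, 0 ≤ x.2 w)}) ∧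
    ∃ iso : (((V →₀ ℤ) × (W →₀ ℤ)) ⧸ (graphK s r).range) ≃+ (W →₀ ℤ),
      (∀ w : W, iso (QuotientAddGroup.mk (delta (Sum.inr w))) = Finsupp.single w 1) ∧
      (∀ (v : V) (w : W), iso (QuotientAddGroup.mk (delta (Sum.inl v))) w =
        Nat.card {l : List E // ∃ h : l ≠ [], s (l.head h) = v ∧
          l.Chain' (fun a b => r a = Sum.inl (s b)) ∧ r (l.getLast h) = Sum.inr w}) := by
  
  classical
  have hwf : WellFounded (childRel s r) := childRel_wf s r hnoloop
  -- the cone submonoid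
  set C : AddSubmonoid ((V →₀ ℤ) × (W →₀ ℤ)) :=
    { carrier := {x : (V →₀ ℤ) × (W →₀ ℤ) | (∀ v, 0 ≤ x.1 v) ∧ (∀ w, 0 ≤ x.2 w)},
      zero_mem' := ⟨fun v => le_refl 0, fun w => le_refl 0⟩,
      add_mem' := fun ha hb => ⟨fun v => add_nonneg (ha.1 v) (hb.1 v),
        fun w => add_nonneg (ha.2 w) (hb.2 w)⟩ } with hC
  have hdelta_mem : ∀ u : V ⊕ W, delta u ∈ C := by
    rintro (v | w) <;>
      refine ⟨fun a => ?_, fun a => ?_⟩ <;>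
      simp [delta, Finsupp.single_apply] <;>
      split_ifs <;> norm_num
  have hsingle_smul : ∀ (x : V →₀ ℤ) (v : V), 0 ≤ x v →
      (x v).toNat • delta (Sum.inl v) = ((Finsupp.single v (x v) : V →₀ ℤ),
        ((0 : W →₀ ℤ))) := by
    intro x v hv
    refine Prod.ext ?_ ?_ <;> simp [delta, Finsupp.smul_single]
    rw [sup_eq_left.mpr hv]
  have hsingle_smul' : ∀ (y : W →₀ ℤ) (w : W), 0 ≤ y w →
      (y w).toNat • delta (Sum.inr w) = (((0 : V →₀ ℤ)),
        (Finsupp.single w (y w) : W →₀ ℤ)) := by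
    intro y w hw
    refine Prod.ext ?_ ?_ <;> simp [delta, Finsupp.smul_single]
    rw [sup_eq_left.mpr hw]
  have hC_le : C ≤ AddSubmonoid.closure
      (Set.range (delta : V ⊕ W → (V →₀ ℤ) × (W →₀ ℤ))) := by
    rintro ⟨x, y⟩ ⟨hx, hy⟩
    have h1 : ((x, (0 : W →₀ ℤ)) : (V →₀ ℤ) × (W →₀ ℤ)) =
        ∑ v ∈ x.support, (x v).toNat • delta (Sum.inl v) := by
      rw [Finset.sum_congr rfl fun v hv => hsingle_smul x v (hx v)]
      refine Prod.ext ?_ ?_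
      · rw [Prod.fst_sum]
        exact (Finsupp.sum_single x).symm
      · rw [Prod.snd_sum]
        simp
    have h2 : (((0 : V →₀ ℤ), y) : (V →₀ ℤ) × (W →₀ ℤ)) =
        ∑ w ∈ y.support, (y w).toNat • delta (Sum.inr w) := by
      rw [Finset.sum_congr rfl fun w hw => hsingle_smul' y w (hy w)]
      refine Prod.ext ?_ ?_
      · rw [Prod.fst_sum]
        simp
      · rw [Prod.snd_sum]
        exact (Finsupp.sum_single y).symm
    have hxy : ((x, y) : (V →₀ ℤ) × (W →₀ ℤ)) = (x, 0) + (0, y) := by simp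
    rw [hxy, h1, h2]
    refine add_mem (AddSubmonoid.sum_mem _ fun v _ => nsmul_mem
        (AddSubmonoid.subset_closure (Set.mem_range_self (Sum.inl v))) _)
      (AddSubmonoid.sum_mem _ fun w _ => nsmul_mem
        (AddSubmonoid.subset_closure (Set.mem_range_self (Sum.inr w))) _)
  have hgen : (Set.range fun u : V ⊕ W => (QuotientAddGroup.mk (delta u) :
      ((V →₀ ℤ) × (W →₀ ℤ)) ⧸ (graphK s r).range)) =
      (QuotientAddGroup.mk' (graphK s r).range) '' Set.range delta := by
    rw [← Set.range_comp]; rfl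
  constructor
  · -- part 1
    have hmain : AddSubmonoid.closure (Set.range fun u : V ⊕ W =>
        (QuotientAddGroup.mk (delta u) :
          ((V →₀ ℤ) × (W →₀ ℤ)) ⧸ (graphK s r).range)) =
        AddSubmonoid.map (QuotientAddGroup.mk' (graphK s r).range) C := by
      refine le_antisymm (AddSubmonoid.closure_le.mpr ?_) ?_
      · rintro _ ⟨u, rfl⟩
        exact ⟨delta u, hdelta_mem u, rfl⟩
      · calc AddSubmonoid.map (QuotientAddGroup.mk' (graphK s r).range) C
            ≤ AddSubmonoid.map (QuotientAddGroup.mk' (graphK s r).range)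
              (AddSubmonoid.closure (Set.range delta)) :=
              AddSubmonoid.monotone_map hC_le
          _ = AddSubmonoid.closure ((QuotientAddGroup.mk' (graphK s r).range) ''
              Set.range delta) := AddMonoidHom.map_mclosure _ _
          _ = _ := by rw [← hgen]
    rw [hmain]
    rfl
  · -- part 2
    have hker : (graphK s r).range ≤ (phi s r).ker := by
      rintro x ⟨y, rfl⟩
      exact AddMonoidHom.mem_ker.mpr (phi_graphK s r hwf y)
    have hmem : ∀ x1 : V →₀ ℤ,
        ((x1, -(x1.sum fun v n => n • pcount s r v)) : (V →₀ ℤ) × (W →₀ ℤ)) ∈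
          (graphK s r).range := by
      intro x1
      induction x1 using Finsupp.induction_linear with
      | zero => exact ⟨0, by simp; rfl⟩
      | add f g hf hg =>
        have h3 : ((f + g, -((f + g).sum fun v n => n • pcount s r v)) :
            (V →₀ ℤ) × (W →₀ ℤ)) =
            (f, -(f.sum fun v n => n • pcount s r v)) +
            (g, -(g.sum fun v n => n • pcount s r v)) := by
          rw [Finsupp.sum_add_index' (fun a => zero_smul ℤ (pcount s r a))
            (fun a b₁ b₂ => add_smul b₁ b₂ (pcount s r a))]
          refine Prod.ext rfl ?_
          simp [neg_add, add_comm]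
        rw [h3]
        exact add_mem hf hg
      | single a b =>
        have h3 : (((Finsupp.single a b : V →₀ ℤ),
            -((Finsupp.single a b : V →₀ ℤ).sum fun v n => n • pcount s r v)) :
            (V →₀ ℤ) × (W →₀ ℤ)) =
            b • ((Finsupp.single a 1 : V →₀ ℤ), -(pcount s r a)) := by
          rw [Finsupp.sum_single_index (zero_smul ℤ (pcount s r a))]
          refine Prod.ext ?_ ?_
          · simp [Finsupp.smul_single]
          · simp
        rw [h3]
        exact zsmul_mem (key_mem s r hwf a) b
    refine ⟨{ toFun := QuotientAddGroup.lift (graphK s r).range (phi s r) hker,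
              invFun := fun y => QuotientAddGroup.mk ((0 : V →₀ ℤ), y),
              left_inv := ?_, right_inv := ?_,
              map_add' := map_add _ }, ?_, ?_⟩
    · intro g
      induction g using QuotientAddGroup.induction_on with
      | H x =>
      rw [QuotientAddGroup.lift_mk]
      rw [QuotientAddGroup.eq]
      have h4 : -((((0 : V →₀ ℤ), phi s r x)) : (V →₀ ℤ) × (W →₀ ℤ)) + x =
          (x.1, -(x.1.sum fun v n => n • pcount s r v)) := by
        refine Prod.ext ?_ ?_ <;>
          simp [phi, Finsupp.liftAddHom_apply, zmultiplesHom_apply] <;>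
          simp [Finsupp.sum_fintype, zmultiplesHom_apply]
      rw [h4]
      exact hmem x.1
    · intro y
      rw [QuotientAddGroup.lift_mk]
      simp [phi]
    · intro w
      show QuotientAddGroup.lift _ _ hker (QuotientAddGroup.mk (delta (Sum.inr w))) = _
      rw [QuotientAddGroup.lift_mk]
      exact phi_delta_inr s r w
    · intro v w
      show (QuotientAddGroup.lift _ _ hker
        (QuotientAddGroup.mk (delta (Sum.inl v)))) w = _
      rw [QuotientAddGroup.lift_mk]
      rw [phi_delta_inl s r v, pcount_apply]
      rfl
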